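/- arXiv:2305.09030 — 3 statements merged into one kernel-verified Lean document; each statement's English description precedes it below -/
import Mathlib

section
/- Let X be the formal power series in ℤ⟦t⟧ whose coefficient of tⁿ is the number of Motzkin paths of length n. Then t²·X² + (t − 1)·X + 1 = 0 in ℤ⟦t⟧, i.e. X = 1 + t·X + t²·X². -/
/-!
Let `G a` be the generating function of nonnegative paths from height `a` down to `0`. Splitting
off the first step gives the linear system `G 0 = 1 + X (G 1 + G 0)` and
`G (a + 1) = X (G (a + 2) + G (a + 1) + G a)`. The differences `G (a + 1) - X G 0 G a` satisfy the
same system without its constant term, so they span an ideal `I ≤ (X) I` of `ℤ⟦X⟧`, which must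
be zero. Hence `G 1 = X G 0 ^ 2`, and the equation for `G 0` becomes `G 0 = 1 + X G 0 + X² G 0²`.
-/

open Finset

/-- Height after `i` steps of the walk `s`, starting at height `a`. -/
def height {n : ℕ} (a : ℤ) (s : Fin n → ℤ) (i : ℕ) : ℤ :=
  a + ∑ j ∈ Finset.univ.filter (fun j : Fin n => (j : ℕ) < i), s j

open scoped Classical in
/-- Motzkin paths of length `n`: sequences of steps in {1, 0, -1} whose partial sums
stay ≥ 0 and end at 0. -/
noncomputable def motzkinPaths (n : ℕ) : Finset (Fin n → ℤ) :=
  (Fintype.piFinset fun _ => ({1, 0, -1} : Finset ℤ)).filter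
    (fun s => (∀ i ∈ Finset.Icc 1 n, 0 ≤ height 0 s i) ∧ height 0 s n = 0)

open PowerSeries

theorem PowerSeries.eq_bot_of_le_span_X_mul {R : Type*} [CommSemiring R] {I : Ideal R⟦X⟧}
    (h : I ≤ Ideal.span {X} * I) : I = ⊥ := by
  have hpow : ∀ n, I ≤ Ideal.span {X ^ n} := fun n => by
    induction n with
    | zero => simp
    | succ n ih =>
      calc I ≤ Ideal.span {X} * I := h
        _ ≤ Ideal.span {X} * Ideal.span {X ^ n} := Ideal.mul_mono_right ih
        _ = Ideal.span {X ^ (n + 1)} := by rw [Ideal.span_singleton_mul_span_singleton, pow_succ']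
  refine eq_bot_iff.2 fun f hf => Ideal.mem_bot.2 (ext fun n => ?_)
  exact X_pow_dvd_iff.1 (Ideal.mem_span_singleton.1 (hpow (n + 1) hf)) n n.lt_succ_self

section FirstStep

variable {R : Type*} [CommRing R] {G : ℕ → R⟦X⟧}

theorem firstStep_succ_eq_X_mul_mul (h0 : G 0 = 1 + X * (G 1 + G 0))
    (hsucc : ∀ a, G (a + 1) = X * (G (a + 2) + G (a + 1) + G a)) (a : ℕ) :
    G (a + 1) = X * G 0 * G a := by
  set D : ℕ → R⟦X⟧ := fun a => G (a + 1) - X * G 0 * G a with hD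
  have hI : Ideal.span (Set.range D) ≤ Ideal.span {X} * Ideal.span (Set.range D) := by
    refine Ideal.span_le.2 ?_
    rintro _ ⟨a, rfl⟩
    have mem : ∀ b, D b ∈ Ideal.span (Set.range D) := fun b => Ideal.subset_span ⟨b, rfl⟩
    have hX : X ∈ Ideal.span {(X : R⟦X⟧)} := Ideal.mem_span_singleton_self X
    rcases a with _ | b
    · have : D 0 = X * (D 1 + D 0) := by
        simp only [hD, zero_add, Nat.reduceAdd]; linear_combination hsucc 0 - (X * G 0) * h0
      rw [this]; exact Ideal.mul_mem_mul hX (add_mem (mem 1) (mem 0))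
    · have : D (b + 1) = X * (D (b + 2) + D (b + 1) + D b) := by
        simp only [hD]; linear_combination hsucc (b + 1) - (X * G 0) * hsucc b
      rw [this]; exact Ideal.mul_mem_mul hX (add_mem (add_mem (mem _) (mem _)) (mem _))
  exact sub_eq_zero.1 (Ideal.span_eq_bot.1 (eq_bot_of_le_span_X_mul hI) _ ⟨a, rfl⟩)

theorem firstStep_quadratic (h0 : G 0 = 1 + X * (G 1 + G 0))
    (hsucc : ∀ a, G (a + 1) = X * (G (a + 2) + G (a + 1) + G a)) :
    X ^ 2 * G 0 ^ 2 + (X - 1) * G 0 + 1 = 0 := by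
  have h1 : G 1 = X * G 0 * G 0 := firstStep_succ_eq_X_mul_mul h0 hsucc 0
  linear_combination -h0 - X * h1

end FirstStep

theorem height_zero {n : ℕ} (a : ℤ) (s : Fin n → ℤ) : height a s 0 = a := by
  simp [height]

theorem height_cons_succ {n : ℕ} (a x : ℤ) (s : Fin n → ℤ) (i : ℕ) :
    height a (Fin.cons x s : Fin (n + 1) → ℤ) (i + 1) = height (a + x) s i := by
  simp [height, Finset.sum_filter, Fin.sum_univ_succ, add_assoc]

open scoped Classical in
noncomputable def motzkinPathsFrom (a : ℤ) (n : ℕ) : Finset (Fin n → ℤ) :=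
  (Fintype.piFinset fun _ => ({1, 0, -1} : Finset ℤ)).filter
    (fun s => (∀ i ≤ n, 0 ≤ height a s i) ∧ height a s n = 0)

theorem mem_motzkinPathsFrom {a : ℤ} {n : ℕ} {s : Fin n → ℤ} :
    s ∈ motzkinPathsFrom a n ↔
      (∀ j, s j ∈ ({1, 0, -1} : Finset ℤ)) ∧ (∀ i ≤ n, 0 ≤ height a s i) ∧ height a s n = 0 := by
  simp only [motzkinPathsFrom, Finset.mem_filter, Fintype.mem_piFinset]

theorem motzkinPathsFrom_zero_left (n : ℕ) : motzkinPathsFrom 0 n = motzkinPaths n := by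
  ext s
  simp only [mem_motzkinPathsFrom, motzkinPaths, Finset.mem_filter, Fintype.mem_piFinset,
    Finset.mem_Icc]
  refine and_congr_right fun _ => and_congr_left fun _ => ⟨fun h i hi => h i hi.2, fun h i hi => ?_⟩
  rcases i with _ | i
  · rw [height_zero]
  · exact h _ ⟨i.succ_pos, hi⟩

theorem motzkinPathsFrom_of_neg {a : ℤ} (ha : a < 0) (n : ℕ) : motzkinPathsFrom a n = ∅ := by
  ext s
  simp only [mem_motzkinPathsFrom, Finset.notMem_empty, iff_false]
  rintro ⟨-, h, -⟩
  have := h 0 n.zero_le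
  rw [height_zero] at this
  omega

theorem card_motzkinPathsFrom_zero_right (a : ℤ) :
    (motzkinPathsFrom a 0).card = if a = 0 then 1 else 0 := by
  split_ifs with ha
  · rw [Finset.card_eq_one]
    refine ⟨Fin.elim0, Finset.eq_singleton_iff_unique_mem.2 ⟨?_, fun s _ => Subsingleton.elim _ _⟩⟩
    simp [mem_motzkinPathsFrom, height_zero, ha]
  · rw [Finset.card_eq_zero, Finset.eq_empty_iff_forall_notMem]
    intro s hs
    exact ha (by simpa [height_zero] using (mem_motzkinPathsFrom.1 hs).2.2)

theorem cons_mem_motzkinPathsFrom {a x : ℤ} {n : ℕ} {s : Fin n → ℤ} :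
    (Fin.cons x s : Fin (n + 1) → ℤ) ∈ motzkinPathsFrom a (n + 1) ↔
      0 ≤ a ∧ x ∈ ({1, 0, -1} : Finset ℤ) ∧ s ∈ motzkinPathsFrom (a + x) n := by
  simp only [mem_motzkinPathsFrom, Fin.forall_fin_succ, Fin.cons_zero, Fin.cons_succ,
    ← Nat.lt_succ_iff, Nat.forall_lt_succ_left, height_cons_succ, height_zero]
  tauto

theorem card_motzkinPathsFrom_succ {a : ℤ} (ha : 0 ≤ a) (n : ℕ) :
    (motzkinPathsFrom a (n + 1)).card = (motzkinPathsFrom (a + 1) n).card +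
      (motzkinPathsFrom a n).card + (motzkinPathsFrom (a - 1) n).card := by
  have hsplit : (motzkinPathsFrom a (n + 1)).card =
      (({1, 0, -1} : Finset ℤ).sigma fun x => motzkinPathsFrom (a + x) n).card := by
    refine Finset.card_bij' (fun s _ => ⟨s 0, Fin.tail s⟩) (fun p _ => Fin.cons p.1 p.2)
      (fun s hs => ?_) (fun p hp => ?_) (fun s _ => Fin.cons_self_tail s) (fun p _ => by simp)
    · rw [← Fin.cons_self_tail s, cons_mem_motzkinPathsFrom] at hs
      exact Finset.mem_sigma.2 hs.2
    · exact cons_mem_motzkinPathsFrom.2 ⟨ha, Finset.mem_sigma.1 hp⟩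
  rw [hsplit, Finset.card_sigma, Finset.sum_insert (by decide), Finset.sum_insert (by decide),
    Finset.sum_singleton, add_zero, ← sub_eq_add_neg, add_assoc]

noncomputable def motzkinSeries (a : ℤ) : ℤ⟦X⟧ :=
  mk fun n => ((motzkinPathsFrom a n).card : ℤ)

theorem motzkinSeries_of_neg {a : ℤ} (ha : a < 0) : motzkinSeries a = 0 := by
  ext n
  simp [motzkinSeries, motzkinPathsFrom_of_neg ha]

theorem motzkinSeries_eq_firstStep {a : ℤ} (ha : 0 ≤ a) :
    motzkinSeries a = (if a = 0 then 1 else 0) +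
      X * (motzkinSeries (a + 1) + motzkinSeries a + motzkinSeries (a - 1)) := by
  ext (_ | n)
  · split_ifs with h <;> simp [motzkinSeries, card_motzkinPathsFrom_zero_right, h]
  · simp [motzkinSeries, card_motzkinPathsFrom_succ ha, coeff_succ_X_mul, apply_ite]

/-- the generating function of Motzkin paths satisfies
t²X² + (t − 1)X + 1 = 0, i.e. X = 1 + tX + t²X². -/
theorem stmt2 :
    (PowerSeries.X : PowerSeries ℤ) ^ 2 *
        (PowerSeries.mk fun n => ((motzkinPaths n).card : ℤ)) ^ 2
      + ((PowerSeries.X : PowerSeries ℤ) - 1) *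
        (PowerSeries.mk fun n => ((motzkinPaths n).card : ℤ)) + 1 = 0 := by
  have h0 : (mk fun n => ((motzkinPaths n).card : ℤ)) = motzkinSeries ((0 : ℕ) : ℤ) := by
    simp [motzkinSeries, motzkinPathsFrom_zero_left]
  rw [h0]
  refine firstStep_quadratic (G := fun b : ℕ => motzkinSeries b) ?_ fun b => ?_
  · simpa [motzkinSeries_of_neg] using motzkinSeries_eq_firstStep (a := 0) le_rfl
  · have := motzkinSeries_eq_firstStep (a := b + 1) (by positivity)
    rw [if_neg (by omega), zero_add, add_sub_cancel_right] at this
    simpa [add_assoc] using this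
end

section
/- Fix a finite set S of integers. For all integers a ≥ 1, b ≥ 1 and n ≥ 0, f(a,b,n) = Σ_{k=0}^{n} g(a,0,k)·f(0,b,n−k) + f(a−1,b−1,n), where g(a,0,k) denotes the number of walks of length k from height a with steps in S satisfying h_k = 0 and h_i > 0 for all 0 ≤ i < k. -/
/-!
Split a nonnegative walk from `a` to `b` at its first visit to height `0`. If that visit
happens at time `k ≤ n`, the walk is a first passage from `a` to `0` of length `k`
followed by an arbitrary nonnegative walk from `0` to `b` of length `n - k`, and
concatenation is a bijection onto such pairs. If the walk never visits `0`, it stays at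
height `≥ 1`, so lowering it by one gives exactly the nonnegative walks from `a - 1` to
`b - 1`.
-/

open Finset

open scoped Classical in
/-- `f S a b n`: number of walks of length n from height a with steps in S that
stay weakly above the x-axis and end at height b. -/
noncomputable def f (S : Finset ℤ) (a b : ℤ) (n : ℕ) : ℕ :=
  ((Fintype.piFinset fun _ : Fin n => S).filter
    (fun s => (∀ i ∈ Finset.range (n + 1), 0 ≤ height a s i) ∧ height a s n = b)).card

open scoped Classical in
/-- `ga0 S a k`: number of walks of length k from height a with steps in S with
h_k = 0 and h_i > 0 for all 0 ≤ i < k. -/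
noncomputable def ga0 (S : Finset ℤ) (a : ℤ) (k : ℕ) : ℕ :=
  ((Fintype.piFinset fun _ : Fin k => S).filter
    (fun s => height a s k = 0 ∧ ∀ i ∈ Finset.range k, 0 < height a s i)).card

section

variable {k m n : ℕ}

lemma height_sub (a c : ℤ) (s : Fin n → ℤ) (i : ℕ) : height (a - c) s i = height a s i - c := by
  unfold height; ring

lemma height_append_of_le (a : ℤ) (p : Fin k → ℤ) (q : Fin m → ℤ) {i : ℕ} (hi : i ≤ k) :
    height a (Fin.append p q) i = height a p i := by
  unfold height
  rw [sum_filter, sum_filter, Fin.sum_univ_add]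
  simp only [Fin.val_castAdd, Fin.val_natAdd, Fin.append_left, Fin.append_right]
  have hq : ∀ j : Fin m, ¬ k + (j : ℕ) < i := fun j => by omega
  simp only [hq, if_false, sum_const_zero, add_zero]

lemma height_append_add (a : ℤ) (p : Fin k → ℤ) (q : Fin m → ℤ) (j : ℕ) :
    height a (Fin.append p q) (k + j) = height (height a p k) q j := by
  unfold height
  rw [sum_filter, sum_filter, sum_filter, Fin.sum_univ_add]
  simp only [Fin.val_castAdd, Fin.val_natAdd, Fin.append_left, Fin.append_right,
    add_lt_add_iff_left]
  rw [add_assoc]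
  congr 2
  exact sum_congr rfl fun i _ => by rw [if_pos (by omega), if_pos i.2]

def IsNonnegWalk (a b : ℤ) (s : Fin n → ℤ) : Prop :=
  (∀ i ∈ range (n + 1), 0 ≤ height a s i) ∧ height a s n = b

def IsFirstPassage (a : ℤ) (s : Fin k → ℤ) : Prop :=
  height a s k = 0 ∧ ∀ i ∈ range k, 0 < height a s i

open scoped Classical in
lemma f_eq_card (S : Finset ℤ) (a b : ℤ) :
    f S a b n = #{s ∈ Fintype.piFinset fun _ : Fin n => S | IsNonnegWalk a b s} := by
  unfold f IsNonnegWalk; congr!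

open scoped Classical in
lemma ga0_eq_card (S : Finset ℤ) (a : ℤ) :
    ga0 S a k = #{s ∈ Fintype.piFinset fun _ : Fin k => S | IsFirstPassage a s} := by
  unfold ga0 IsFirstPassage; congr!

/-- Equal to `n + 1` when the walk never visits height `0`. -/
noncomputable def firstZero (a : ℤ) (s : Fin n → ℤ) : ℕ :=
  Nat.find (⟨n + 1, Or.inr (lt_add_one n)⟩ : ∃ i, height a s i = 0 ∨ n < i)

lemma firstZero_le (a : ℤ) (s : Fin n → ℤ) : firstZero a s ≤ n + 1 :=
  Nat.find_min' _ (Or.inr (lt_add_one n))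

lemma firstZero_eq_iff {a : ℤ} {s : Fin n → ℤ} (hk : k ≤ n) :
    firstZero a s = k ↔ height a s k = 0 ∧ ∀ i < k, height a s i ≠ 0 := by
  unfold firstZero
  rw [Nat.find_eq_iff]
  refine and_congr (or_iff_left (by omega)) (forall₂_congr fun i hi => ?_)
  rw [not_or, and_iff_left (by omega)]

lemma firstZero_eq_succ_iff {a : ℤ} {s : Fin n → ℤ} :
    firstZero a s = n + 1 ↔ ∀ i ≤ n, height a s i ≠ 0 := by
  unfold firstZero
  rw [Nat.find_eq_iff]
  simp only [lt_add_one, or_true, true_and, Nat.lt_succ_iff, not_or, not_lt]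
  exact forall₂_congr fun i hi => and_iff_left hi

lemma isNonnegWalk_and_firstZero_eq_succ_iff (a b : ℤ) (s : Fin n → ℤ) :
    IsNonnegWalk a b s ∧ firstZero a s = n + 1 ↔ IsNonnegWalk (a - 1) (b - 1) s := by
  simp only [IsNonnegWalk, firstZero_eq_succ_iff, height_sub, mem_range, Nat.lt_succ_iff]
  constructor
  · rintro ⟨⟨hnn, rfl⟩, hne⟩
    exact ⟨fun i hi => by have := hnn i hi; have := hne i hi; omega, rfl⟩
  · rintro ⟨hnn, hend⟩
    exact ⟨⟨fun i hi => by have := hnn i hi; omega, by omega⟩,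
      fun i hi => by have := hnn i hi; omega⟩

lemma isNonnegWalk_append_and_firstZero_eq_iff (a b : ℤ) (p : Fin k → ℤ)
    (q : Fin m → ℤ) :
    IsNonnegWalk a b (Fin.append p q) ∧ firstZero a (Fin.append p q) = k ↔
      IsFirstPassage a p ∧ IsNonnegWalk 0 b q := by
  have hlow : ∀ i ≤ k, height a (Fin.append p q) i = height a p i :=
    fun i hi => height_append_of_le a p q hi
  have hhigh : ∀ j, height a (Fin.append p q) (k + j) = height (height a p k) q j :=
    height_append_add a p q
  simp only [IsNonnegWalk, IsFirstPassage, firstZero_eq_iff (Nat.le_add_right k m), mem_range]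
  constructor
  · rintro ⟨⟨hnn, hend⟩, h0, hne⟩
    rw [hlow k le_rfl] at h0
    refine ⟨⟨h0, fun i hi => ?_⟩, fun j hj => ?_, ?_⟩
    · rw [← hlow i hi.le]
      exact (hnn i (by omega)).lt_of_ne' (hne i hi)
    · simpa only [hhigh, h0] using hnn (k + j) (by omega)
    · rwa [hhigh, h0] at hend
  · rintro ⟨⟨h0, hpos⟩, hnn, hend⟩
    refine ⟨⟨fun i hi => ?_, by rw [hhigh, h0, hend]⟩, by rw [hlow k le_rfl, h0], fun i hi => ?_⟩
    · rcases le_or_gt i k with hik | hki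
      · rcases hik.lt_or_eq with hik | rfl
        · rw [hlow i hik.le]; exact (hpos i hik).le
        · rw [hlow i le_rfl, h0]
      · obtain ⟨j, rfl⟩ := Nat.exists_eq_add_of_lt hki
        rw [add_assoc, hhigh, h0]
        exact hnn (j + 1) (by omega)
    · rw [hlow i hi.le]
      exact (hpos i hi).ne'

open scoped Classical in
lemma card_isNonnegWalk_firstZero_eq (S : Finset ℤ) (a b : ℤ) :
    #{s ∈ Fintype.piFinset fun _ : Fin (k + m) => S | IsNonnegWalk a b s ∧ firstZero a s = k}
      = ga0 S a k * f S 0 b m := by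
  rw [ga0_eq_card, f_eq_card, ← card_product]
  refine (card_equiv (Fin.appendEquiv k m) fun ⟨p, q⟩ => ?_).symm
  simp only [Fin.appendEquiv, Equiv.coe_fn_mk, mem_product, mem_filter, Fintype.mem_piFinset,
    isNonnegWalk_append_and_firstZero_eq_iff, Fin.forall_fin_add, Fin.append_left,
    Fin.append_right, and_and_and_comm]

open scoped Classical in
lemma card_isNonnegWalk_firstZero_eq_succ (S : Finset ℤ) (a b : ℤ) :
    #{s ∈ Fintype.piFinset fun _ : Fin n => S | IsNonnegWalk a b s ∧ firstZero a s = n + 1}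
      = f S (a - 1) (b - 1) n := by
  simp only [isNonnegWalk_and_firstZero_eq_succ_iff, f_eq_card]

end

theorem stmt6_general (S : Finset ℤ) (a b : ℤ) (n : ℕ) :
    f S a b n = (∑ k ∈ Finset.range (n + 1), ga0 S a k * f S 0 b (n - k))
      + f S (a - 1) (b - 1) n := by
  classical
  rw [f_eq_card, card_eq_sum_card_fiberwise (f := firstZero a) (t := range (n + 2))
    fun s _ => mem_range.2 (Nat.lt_succ_of_le (firstZero_le a s)), sum_range_succ]
  congr 1
  · refine sum_congr rfl fun k hk => ?_
    obtain ⟨m, rfl⟩ := Nat.exists_eq_add_of_le (mem_range_succ_iff.1 hk)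
    rw [filter_filter, card_isNonnegWalk_firstZero_eq, Nat.add_sub_cancel_left]
  · rw [filter_filter, card_isNonnegWalk_firstZero_eq_succ]

/-- for a ≥ 1, b ≥ 1, n ≥ 0,
f(a,b,n) = Σ_{k=0}^{n} g(a,0,k)·f(0,b,n−k) + f(a−1,b−1,n). -/
theorem stmt6 (S : Finset ℤ) (a b : ℤ) (ha : 1 ≤ a) (hb : 1 ≤ b) (n : ℕ) :
    f S a b n = (∑ k ∈ Finset.range (n + 1), ga0 S a k * f S 0 b (n - k))
      + f S (a - 1) (b - 1) n :=
  stmt6_general S a b n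
end

section
/- For n ≥ 0 let M_n(q) = Σ_{w} q^{area(w)} ∈ ℤ[q], the sum over all Motzkin paths w of length n. Then for every n ≥ 1, M_n(q) = M_{n−1}(q) + Σ_{k=2}^{n} q^{k−1} · M_{k−2}(q) · M_{n−k}(q), and M_0(q) = 1. -/
/-!
Split a nonempty Motzkin path at its first step. A level step is followed by an arbitrary
Motzkin path of length `n - 1` with the same area. An up step `U` is followed by `u D v`, where
`D` is the first return to height `0`; if it happens at step `k`, then `u` and `v` are Motzkin
paths of lengths `k - 2` and `n - k`, and the area is `(k - 1) + area u + area v` since the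
`k - 1` heights inside the arch are those of `u` raised by one. The first return is determined by
the path, so this decomposition is a bijection.
-/

open Finset Polynomial

/-- The area under a path: the sum of its intermediate heights h_1 + ⋯ + h_{n−1}
(a natural number, since heights of Motzkin paths are nonnegative). -/
def area {n : ℕ} (s : Fin n → ℤ) : ℕ :=
  (∑ i ∈ Finset.Ico 1 n, height 0 s i).toNat

/-- `M n = Σ_w q^{area(w)}` over Motzkin paths w of length n, as a polynomial in ℤ[q]. -/
noncomputable def M (n : ℕ) : ℤ[X] :=
  ∑ w ∈ motzkinPaths n, (X : ℤ[X]) ^ area w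

def listHeight (l : List ℤ) (i : ℕ) : ℤ := (l.take i).sum

def listArea (l : List ℤ) : ℤ := ∑ i ∈ range l.length, listHeight l i

structure IsMotzkin (l : List ℤ) : Prop where
  step_mem : ∀ x ∈ l, x ∈ Set.Icc (-1 : ℤ) 1
  height_nonneg : ∀ i, 0 ≤ listHeight l i
  sum_eq_zero : l.sum = 0

def archAppend (u v : List ℤ) : List ℤ := 1 :: (u ++ (-1) :: v)

section Heights

variable {l u : List ℤ} {i : ℕ}

@[simp] lemma listHeight_zero (l : List ℤ) : listHeight l 0 = 0 := by simp [listHeight]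

lemma listHeight_cons_succ (a : ℤ) (l : List ℤ) (i : ℕ) :
    listHeight (a :: l) (i + 1) = a + listHeight l i := by
  simp [listHeight]

lemma listHeight_of_length_le (h : l.length ≤ i) : listHeight l i = l.sum := by
  rw [listHeight, List.take_of_length_le h]

lemma listHeight_succ (h : i < l.length) : listHeight l (i + 1) = listHeight l i + l[i] :=
  List.sum_take_succ l i h

lemma listHeight_append (u w : List ℤ) (i : ℕ) :
    listHeight (u ++ w) i = listHeight u i + listHeight w (i - u.length) := by
  simp [listHeight, List.take_append]

lemma listHeight_take (l : List ℤ) (i j : ℕ) :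
    listHeight (l.take j) i = listHeight l (min i j) := by
  rw [listHeight, listHeight, List.take_take]

lemma listHeight_drop (l : List ℤ) (i j : ℕ) :
    listHeight (l.drop j) i = listHeight l (j + i) - listHeight l j := by
  rw [listHeight, listHeight, listHeight, List.take_add, List.sum_append]
  ring

lemma listArea_cons (a : ℤ) (l : List ℤ) : listArea (a :: l) = a * l.length + listArea l := by
  simp only [listArea, List.length_cons, sum_range_succ', listHeight_cons_succ, listHeight_zero,
    add_zero, sum_add_distrib, sum_const, card_range, nsmul_eq_mul]
  ring

lemma listArea_append (u w : List ℤ) :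
    listArea (u ++ w) = listArea u + listArea w + u.sum * w.length := by
  induction u with
  | nil => simp [listArea]
  | cons a u ih =>
    simp only [List.cons_append, listArea_cons, ih, List.length_append, List.sum_cons]
    push_cast
    ring

lemma listArea_nonneg (h : ∀ i, 0 ≤ listHeight l i) : 0 ≤ listArea l :=
  sum_nonneg fun i _ => h i

lemma listArea_archAppend (hu : u.sum = 0) (v : List ℤ) :
    listArea (archAppend u v) = u.length + 1 + listArea u + listArea v := by
  simp only [archAppend, listArea_cons, listArea_append, hu, List.length_append,
    List.length_cons]
  push_cast
  ring

end Heights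

section Motzkin

variable {a : ℤ} {l t u u' v v' : List ℤ}

lemma IsMotzkin.nil : IsMotzkin [] :=
  ⟨by simp, by simp [listHeight], rfl⟩

lemma isMotzkin_cons_zero_iff : IsMotzkin (0 :: l) ↔ IsMotzkin l := by
  constructor
  · rintro ⟨hstep, hheight, hsum⟩
    refine ⟨fun x hx => hstep x (List.mem_cons_of_mem _ hx), fun i => ?_, by simpa using hsum⟩
    simpa [listHeight_cons_succ] using hheight (i + 1)
  · rintro ⟨hstep, hheight, hsum⟩
    refine ⟨?_, ?_, by simpa using hsum⟩
    · simpa using hstep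
    · rintro (_ | i)
      · simp
      · simpa [listHeight_cons_succ] using hheight i

lemma isMotzkin_archAppend (hu : IsMotzkin u) (hv : IsMotzkin v) :
    IsMotzkin (archAppend u v) := by
  refine ⟨?_, ?_, by simp [archAppend, hu.sum_eq_zero, hv.sum_eq_zero]⟩
  · simp only [archAppend, List.mem_cons, List.mem_append]
    rintro x (rfl | hx | rfl | hx)
    · simp
    · exact hu.step_mem x hx
    · simp
    · exact hv.step_mem x hx
  · rintro (_ | i)
    · simp
    rw [archAppend, listHeight_cons_succ, listHeight_append]
    rcases le_or_gt i u.length with hi | hi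
    · simpa [Nat.sub_eq_zero_of_le hi] using
        (by linarith [hu.height_nonneg i] : (0 : ℤ) ≤ 1 + listHeight u i)
    · obtain ⟨j, rfl⟩ : ∃ j, i = u.length + 1 + j := ⟨i - u.length - 1, by omega⟩
      rw [listHeight_of_length_le (by omega), hu.sum_eq_zero,
        show u.length + 1 + j - u.length = j + 1 by omega, listHeight_cons_succ]
      linarith [hv.height_nonneg j]

/-- The first return of `1 :: t` to height `0` splits `t` as `u ++ (-1) :: v`. -/
lemma IsMotzkin.exists_eq_archAppend (h : IsMotzkin (1 :: t)) :
    ∃ u v, IsMotzkin u ∧ IsMotzkin v ∧ 1 :: t = archAppend u v := by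
  have hge : ∀ i, -1 ≤ listHeight t i := fun i => by
    linarith [h.height_nonneg (i + 1), listHeight_cons_succ 1 t i]
  have hsum : t.sum = -1 := by linarith [h.sum_eq_zero, List.sum_cons (a := (1 : ℤ)) (l := t)]
  have hex : ∃ j, listHeight t j = -1 :=
    ⟨t.length, by rw [listHeight_of_length_le le_rfl, hsum]⟩
  set j := Nat.find hex
  have hj : listHeight t j = -1 := Nat.find_spec hex
  have hbefore : ∀ i < j, 0 ≤ listHeight t i := fun i hi => by
    have := hge i; have := Nat.find_min hex hi; omega
  have hj0 : j ≠ 0 := fun h0 => by simp [h0] at hj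
  have hjt : j - 1 < t.length := by
    have : j ≤ t.length := Nat.find_min' hex (by rw [listHeight_of_length_le le_rfl, hsum])
    omega
  have hstep := listHeight_succ hjt
  rw [show j - 1 + 1 = j by omega, hj] at hstep
  have hmem := (h.step_mem _ (List.mem_cons_of_mem _ (List.getElem_mem hjt))).1
  have hlast : listHeight t (j - 1) = 0 ∧ t[j - 1] = -1 := by
    have := hbefore (j - 1) (by omega); omega
  refine ⟨t.take (j - 1), t.drop j, ⟨?_, ?_, ?_⟩, ⟨?_, ?_, ?_⟩, ?_⟩
  · exact fun x hx => h.step_mem x (List.mem_cons_of_mem _ (List.mem_of_mem_take hx))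
  · intro i
    rw [listHeight_take]
    exact hbefore _ (by omega)
  · exact hlast.1
  · exact fun x hx => h.step_mem x (List.mem_cons_of_mem _ (List.mem_of_mem_drop hx))
  · intro i
    rw [listHeight_drop, hj]
    linarith [hge (j + i)]
  · linarith [List.sum_take_add_sum_drop t j, show (t.take j).sum = -1 from hj]
  · have hdrop := List.drop_eq_getElem_cons hjt
    rw [show j - 1 + 1 = j by omega, hlast.2] at hdrop
    rw [archAppend, ← hdrop, List.take_append_drop]

lemma IsMotzkin.cons_cases (h : IsMotzkin (a :: t)) :
    (a = 0 ∧ IsMotzkin t) ∨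
      ∃ u v, IsMotzkin u ∧ IsMotzkin v ∧ a :: t = archAppend u v := by
  have ha := h.step_mem a List.mem_cons_self
  have h1 := h.height_nonneg 1
  rw [listHeight_cons_succ, listHeight_zero, add_zero] at h1
  rcases (by simp only [Set.mem_Icc] at ha; omega : a = 0 ∨ a = 1) with rfl | rfl
  · exact .inl ⟨rfl, isMotzkin_cons_zero_iff.mp h⟩
  · exact .inr h.exists_eq_archAppend

lemma length_le_of_append_neg_one_eq (hu : u.sum = 0) (hu' : ∀ i, 0 ≤ listHeight u' i)
    (h : u ++ (-1) :: v = u' ++ (-1) :: v') : u'.length ≤ u.length := by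
  by_contra! hlt
  have hu'_height : listHeight u' (u.length + 1) = -1 := by
    have := congrArg (listHeight · (u.length + 1)) h
    simp only [listHeight_append, Nat.sub_eq_zero_of_le hlt, listHeight_zero, add_zero,
      Nat.add_sub_cancel_left, listHeight_cons_succ] at this
    rw [listHeight_of_length_le (by omega), hu] at this
    linarith
  linarith [hu' (u.length + 1)]

lemma archAppend_inj (hu : IsMotzkin u) (hu' : IsMotzkin u') :
    archAppend u v = archAppend u' v' ↔ u = u' ∧ v = v' := by
  refine ⟨fun h => ?_, by rintro ⟨rfl, rfl⟩; rfl⟩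
  have h' := List.cons_injective h
  have hlen := (length_le_of_append_neg_one_eq hu.sum_eq_zero hu'.height_nonneg h').antisymm
    (length_le_of_append_neg_one_eq hu'.sum_eq_zero hu.height_nonneg h'.symm)
  obtain ⟨rfl, hv⟩ := List.append_inj h' hlen.symm
  exact ⟨rfl, List.cons_injective hv⟩

end Motzkin

lemma height_zero_eq_listHeight {n : ℕ} (s : Fin n → ℤ) (i : ℕ) :
    height 0 s i = listHeight (List.ofFn s) i := by
  rw [height, listHeight, List.sum_take_ofFn, zero_add]

lemma area_eq_toNat_listArea {n : ℕ} (s : Fin n → ℤ) :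
    area s = (listArea (List.ofFn s)).toNat := by
  rw [area, listArea, List.length_ofFn]
  congr 1
  calc ∑ i ∈ Ico 1 n, height 0 s i = ∑ i ∈ Ico 1 n, listHeight (List.ofFn s) i :=
        sum_congr rfl fun i _ => height_zero_eq_listHeight s i
    _ = _ := sum_subset (fun i hi => mem_range.mpr (mem_Ico.mp hi).2) fun i hin hi => by
        obtain rfl : i = 0 := by simp only [mem_range, mem_Ico, not_and, not_lt] at hin hi; omega
        exact listHeight_zero _

lemma isMotzkin_iff {n : ℕ} {l : List ℤ} (hl : l.length = n) :
    IsMotzkin l ↔ (∀ x ∈ l, x ∈ ({1, 0, -1} : Finset ℤ)) ∧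
      (∀ i ∈ Icc 1 n, 0 ≤ listHeight l i) ∧ listHeight l n = 0 := by
  have hstep : ∀ x : ℤ, x ∈ ({1, 0, -1} : Finset ℤ) ↔ x ∈ Set.Icc (-1) 1 := fun x => by
    simp only [Finset.mem_insert, Finset.mem_singleton, Set.mem_Icc]; omega
  rw [listHeight_of_length_le hl.le]
  simp only [hstep, Finset.mem_Icc]
  refine ⟨fun h => ⟨h.step_mem, fun i _ => h.height_nonneg i, h.sum_eq_zero⟩,
    fun ⟨hs, hh, hsum⟩ => ⟨hs, fun i => ?_, hsum⟩⟩
  rcases Nat.eq_zero_or_pos i with rfl | hi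
  · simp
  rcases le_or_gt i n with hin | hin
  · exact hh i ⟨hi, hin⟩
  · rw [listHeight_of_length_le (by omega), hsum]

noncomputable def motzkinLists (n : ℕ) : Finset (List ℤ) :=
  (motzkinPaths n).map ⟨List.ofFn, List.ofFn_injective⟩

lemma mem_motzkinLists {n : ℕ} {l : List ℤ} :
    l ∈ motzkinLists n ↔ l.length = n ∧ IsMotzkin l := by
  simp only [motzkinLists, Finset.mem_map, motzkinPaths, Finset.mem_filter, Fintype.mem_piFinset,
    Function.Embedding.coeFn_mk, height_zero_eq_listHeight]
  constructor
  · rintro ⟨s, ⟨hs, hh⟩, rfl⟩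
    exact ⟨List.length_ofFn,
      (isMotzkin_iff List.length_ofFn).mpr ⟨List.forall_mem_ofFn_iff.mpr hs, hh⟩⟩
  · rintro ⟨rfl, h⟩
    have h' : IsMotzkin (List.ofFn fun i : Fin l.length => l[(i : ℕ)]) := by
      rwa [List.ofFn_getElem]
    obtain ⟨hs, hh⟩ := (isMotzkin_iff List.length_ofFn).mp h'
    exact ⟨fun i => l[(i : ℕ)], ⟨List.forall_mem_ofFn_iff.mp hs, hh⟩, List.ofFn_getElem⟩

lemma M_eq_sum_motzkinLists (n : ℕ) :
    M n = ∑ l ∈ motzkinLists n, (X : ℤ[X]) ^ (listArea l).toNat := by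
  simp only [M, motzkinLists, sum_map, Function.Embedding.coeFn_mk, area_eq_toNat_listArea]

lemma motzkinLists_zero : motzkinLists 0 = {[]} := by
  ext l
  simp only [mem_motzkinLists, List.length_eq_zero_iff, Finset.mem_singleton]
  exact ⟨And.left, fun h => ⟨h, h ▸ IsMotzkin.nil⟩⟩

/-- The Motzkin paths of length `n` whose first return to height `0` is at step `k`. -/
noncomputable def archLists (n k : ℕ) : Finset (List ℤ) :=
  (motzkinLists (k - 2) ×ˢ motzkinLists (n - k)).image fun p => archAppend p.1 p.2

lemma motzkinLists_succ (n : ℕ) :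
    motzkinLists (n + 1) = (motzkinLists n).map ⟨List.cons 0, List.cons_injective⟩ ∪
      (Icc 2 (n + 1)).biUnion (archLists (n + 1)) := by
  ext l
  simp only [archLists, Finset.mem_union, Finset.mem_map, Finset.mem_biUnion, Finset.mem_image,
    Finset.mem_product, Finset.mem_Icc, mem_motzkinLists, Function.Embedding.coeFn_mk, Prod.exists]
  constructor
  · rintro ⟨hlen, h⟩
    obtain _ | ⟨a, t⟩ := l
    · simp at hlen
    rcases h.cons_cases with ⟨rfl, ht⟩ | ⟨u, v, hu, hv, huv⟩
    · exact .inl ⟨t, ⟨by simpa using hlen, ht⟩, rfl⟩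
    · rw [huv] at hlen
      simp only [archAppend, List.length_cons, List.length_append] at hlen
      exact .inr ⟨u.length + 2, ⟨by omega, by omega⟩, u, v,
        ⟨⟨by omega, hu⟩, by omega, hv⟩, huv.symm⟩
  · rintro (⟨t, ⟨rfl, ht⟩, rfl⟩ | ⟨k, hk, u, v, ⟨⟨hu, hu'⟩, hv, hv'⟩, rfl⟩)
    · exact ⟨rfl, isMotzkin_cons_zero_iff.mpr ht⟩
    · exact ⟨by simp [archAppend]; omega, isMotzkin_archAppend hu' hv'⟩

lemma pairwiseDisjoint_archLists (n : ℕ) : (Set.Ici 2).PairwiseDisjoint (archLists n) := by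
  intro k hk k' hk' hkk'
  simp only [archLists, Function.onFun, Finset.disjoint_left, Finset.mem_image,
    Finset.mem_product, mem_motzkinLists]
  rintro _ ⟨⟨u, v⟩, ⟨⟨hlen, hu⟩, -⟩, rfl⟩
    ⟨⟨u', v'⟩, ⟨⟨hlen', hu'⟩, -⟩, h⟩
  obtain ⟨rfl, -⟩ := (archAppend_inj hu' hu).mp h
  dsimp only at hlen hlen'
  simp only [Set.mem_Ici] at hk hk'
  omega

lemma toNat_listArea_archAppend {u v : List ℤ} (hu : IsMotzkin u) (hv : IsMotzkin v) :
    (listArea (archAppend u v)).toNat =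
      u.length + 1 + (listArea u).toNat + (listArea v).toNat := by
  have := listArea_nonneg hu.height_nonneg
  have := listArea_nonneg hv.height_nonneg
  rw [listArea_archAppend hu.sum_eq_zero]
  omega

lemma sum_archLists {n k : ℕ} (hk : 2 ≤ k) :
    ∑ l ∈ archLists n k, (X : ℤ[X]) ^ (listArea l).toNat =
      X ^ (k - 1) * M (k - 2) * M (n - k) := by
  have hinj : Set.InjOn (fun p : List ℤ × List ℤ => archAppend p.1 p.2)
      ↑(motzkinLists (k - 2) ×ˢ motzkinLists (n - k)) := by
    rintro ⟨u, v⟩ huv ⟨u', v'⟩ huv' h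
    simp only [coe_product, Set.mem_prod, mem_coe, mem_motzkinLists] at huv huv'
    obtain ⟨rfl, rfl⟩ := (archAppend_inj huv.1.2 huv'.1.2).mp h
    rfl
  rw [archLists, sum_image hinj, M_eq_sum_motzkinLists, M_eq_sum_motzkinLists, mul_assoc,
    sum_mul_sum, ← sum_product', mul_sum]
  refine sum_congr rfl fun p hp => ?_
  simp only [mem_product, mem_motzkinLists] at hp
  rw [toNat_listArea_archAppend hp.1.2 hp.2.2, hp.1.1, pow_add, pow_add,
    show k - 2 + 1 = k - 1 by omega, mul_assoc]

lemma M_succ (n : ℕ) :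
    M (n + 1) =
      M n + ∑ k ∈ Icc 2 (n + 1), (X : ℤ[X]) ^ (k - 1) * M (k - 2) * M (n + 1 - k) := by
  have hdisj : Disjoint ((motzkinLists n).map ⟨List.cons 0, List.cons_injective⟩)
      ((Icc 2 (n + 1)).biUnion (archLists (n + 1))) := by
    simp only [archLists, Finset.disjoint_left, Finset.mem_map, Finset.mem_biUnion,
      Finset.mem_image]
    rintro _ ⟨t, -, rfl⟩ ⟨k, -, p, -, hp⟩
    simp [archAppend] at hp
  have hpairwise : (↑(Icc 2 (n + 1)) : Set ℕ).PairwiseDisjoint (archLists (n + 1)) :=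
    (pairwiseDisjoint_archLists (n + 1)).subset fun k hk => Set.mem_Ici.mpr (mem_Icc.mp hk).1
  rw [M_eq_sum_motzkinLists, motzkinLists_succ, sum_union hdisj, sum_map, sum_biUnion hpairwise]
  congr 1
  · simp only [Function.Embedding.coeFn_mk, listArea_cons, zero_mul, zero_add,
      M_eq_sum_motzkinLists]
  · exact sum_congr rfl fun k hk => sum_archLists (mem_Icc.mp hk).1

/-- M_0 = 1 and for n ≥ 1,
M_n(q) = M_{n−1}(q) + Σ_{k=2}^{n} q^{k−1}·M_{k−2}(q)·M_{n−k}(q). -/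
theorem stmt14 :
    M 0 = 1 ∧ ∀ n : ℕ, 1 ≤ n →
      M n = M (n - 1)
        + ∑ k ∈ Finset.Icc 2 n, (X : ℤ[X]) ^ (k - 1) * M (k - 2) * M (n - k) := by
  refine ⟨by simp [M_eq_sum_motzkinLists, motzkinLists_zero, listArea], fun n hn => ?_⟩
  obtain ⟨m, rfl⟩ := Nat.exists_eq_add_of_le' hn
  exact M_succ m
end
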